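/- For every x ∈ V(ℤ), the intersection of the Γ-orbit of x with 𝔘 is a finite set. That is, every Γ-orbit contains at most finitely many integral solutions lying in 𝔘. -/
import Mathlib


/-- The Vieta involution in coordinate `i`:
`x ↦ Function.update x i (αᵢ − xⱼxₗ − xᵢ)` where `j = i+1`, `l = i+2` (mod 3). -/
def vAct (α : Fin 3 → ℤ) (i : Fin 3) (x : Fin 3 → ℤ) : Fin 3 → ℤ :=
  Function.update x i (α i - x (i + 1) * x (i + 2) - x i)

/-- Membership in the integral cubic surface `V(ℤ)`. -/
def onV (α : Fin 3 → ℤ) (β : ℤ) (x : Fin 3 → ℤ) : Prop :=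
  x 0 ^ 2 + x 1 ^ 2 + x 2 ^ 2 + x 0 * x 1 * x 2
    - α 0 * x 0 - α 1 * x 1 - α 2 * x 2 - β = 0

/-- The height function `Δ(x) = |x₁| + |x₂| + |x₃|`. -/
def delta (x : Fin 3 → ℤ) : ℤ := |x 0| + |x 1| + |x 2|

/-- Membership in the finite exceptional set `𝔗`. -/
def inT (α : Fin 3 → ℤ) (β : ℤ) (x : Fin 3 → ℤ) : Prop :=
  onV α β x ∧ ∃ σ : Equiv.Perm (Fin 3),
    |x (σ 0)| ≤ 1 ∨ |x (σ 1) * x (σ 2)| ≤ max (3 * |α (σ 0)|) 4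

/-- Membership in the exceptional set `𝔘`. -/
def inU (α : Fin 3 → ℤ) (β : ℤ) (x : Fin 3 → ℤ) : Prop :=
  onV α β x ∧ ¬ inT α β x ∧ ∃ σ : Equiv.Perm (Fin 3),
    |x (σ 0)| = 2 ∧ delta (vAct α (σ 1) x) ≤ delta x ∧
      delta (vAct α (σ 2) x) ≤ delta x

/-- `y` lies in the `Γ`-orbit of `x`: it is obtained from `x` by a finite
sequence of Vieta involutions. -/
def gammaRel (α : Fin 3 → ℤ) (x y : Fin 3 → ℤ) : Prop :=
  ∃ L : List (Fin 3), y = L.foldl (fun z i => vAct α i z) x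

/-- `y` lies in the `Γ₀`-orbit (mapping class group orbit) of `x`: it is
obtained from `x` by an even-length sequence of Vieta involutions. -/
def gamma0Rel (α : Fin 3 → ℤ) (x y : Fin 3 → ℤ) : Prop :=
  ∃ L : List (Fin 3), L.length % 2 = 0 ∧ y = L.foldl (fun z i => vAct α i z) x

/-- `y` is a descendent of `x`: obtained by a finite sequence of Vieta
involutions along which `Δ` is non-increasing at every step. -/
def descendent (α : Fin 3 → ℤ) (x y : Fin 3 → ℤ) : Prop :=
  ∃ L : List (Fin 3), y = L.foldl (fun z i => vAct α i z) x ∧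
    ∀ t < L.length,
      delta ((L.take (t + 1)).foldl (fun z i => vAct α i z) x) ≤
        delta ((L.take t).foldl (fun z i => vAct α i z) x)

/-- Membership in `𝔗' = {𝒱ᵢ(x), 𝒱ⱼ𝒱ᵢ(x) : x ∈ 𝔗}`. -/
def inT' (α : Fin 3 → ℤ) (β : ℤ) (x : Fin 3 → ℤ) : Prop :=
  ∃ y, inT α β y ∧
    ((∃ i, x = vAct α i y) ∨ ∃ i j, x = vAct α j (vAct α i y))

/-- Membership in `𝔘' = {𝒱ᵢ(x), 𝒱ⱼ𝒱ᵢ(x) : x ∈ 𝔘}`. -/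
def inU' (α : Fin 3 → ℤ) (β : ℤ) (x : Fin 3 → ℤ) : Prop :=
  ∃ y, inU α β y ∧
    ((∃ i, x = vAct α i y) ∨ ∃ i j, x = vAct α j (vAct α i y))

set_option maxHeartbeats 1600000

def bigB (α : Fin 3 → ℤ) (β : ℤ) : ℤ :=
  6*(|α 0| + |α 1| + |α 2|)^2 + 30*(|α 0| + |α 1| + |α 2|) + 6*|β| + 60

lemma vAct_invol (α : Fin 3 → ℤ) (i : Fin 3) (x : Fin 3 → ℤ) :
    vAct α i (vAct α i x) = x := by
  funext j
  fin_cases i <;> fin_cases j <;>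
    simp [vAct, Function.update] <;> ring

lemma onV_vAct (α : Fin 3 → ℤ) (β : ℤ) (i : Fin 3) (x : Fin 3 → ℤ)
    (h : onV α β x) : onV α β (vAct α i x) := by
  fin_cases i <;>
  · simp only [vAct, onV, Function.update] at h ⊢
    simp_all
    linear_combination h

lemma delta_vAct (α : Fin 3 → ℤ) (i : Fin 3) (x : Fin 3 → ℤ) :
    delta (vAct α i x) = |α i - x (i + 1) * x (i + 2) - x i| + |x (i + 1)| + |x (i + 2)| := by
  fin_cases i <;> simp [vAct, delta, Function.update] <;> ring

lemma delta_rot (x : Fin 3 → ℤ) (i : Fin 3) :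
    delta x = |x i| + |x (i + 1)| + |x (i + 2)| := by
  fin_cases i <;> simp [delta] <;> ring

lemma int_bound1 (S C au av aw b u v w : ℤ)
    (hS : |au| + |av| + |aw| ≤ S) (hC : |b| ≤ C)
    (heq : u^2 + v^2 + w^2 + u*v*w - au*u - av*v - aw*w - b = 0)
    (hw : |w| ≤ 1) : |u| + |v| + |w| ≤ 6*S^2 + 30*S + 6*C + 60 := by
  have hS0 : 0 ≤ S := le_trans (by positivity) hS
  have hC0 : 0 ≤ C := le_trans (abs_nonneg b) hC
  have hU : 0 ≤ |u| := abs_nonneg u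
  have hV : 0 ≤ |v| := abs_nonneg v
  have hW : 0 ≤ |w| := abs_nonneg w
  have h1 : au*u ≤ |au| * |u| := le_trans (le_abs_self _) (le_of_eq (abs_mul _ _))
  have h2 : av*v ≤ |av| * |v| := le_trans (le_abs_self _) (le_of_eq (abs_mul _ _))
  have h3 : aw*w ≤ |aw| * |w| := le_trans (le_abs_self _) (le_of_eq (abs_mul _ _))
  have h4 : -(u*v*w) ≤ |u| * |v| * |w| := by
    rw [← abs_mul, ← abs_mul]; exact neg_le_abs _
  have h5 : b ≤ |b| := le_abs_self b
  have hu2 : u^2 = |u|^2 := (sq_abs u).symm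
  have hv2 : v^2 = |v|^2 := (sq_abs v).symm
  have hw2 : w^2 = |w|^2 := (sq_abs w).symm
  have hau : |au| ≤ S := by nlinarith [abs_nonneg av, abs_nonneg aw]
  have hav : |av| ≤ S := by nlinarith [abs_nonneg au, abs_nonneg aw]
  have haw : |aw| ≤ S := by nlinarith [abs_nonneg au, abs_nonneg av]
  have hkey : |u|^2 + |v|^2 ≤ S*(|u| + |v|) + S + C + |u| * |v| := by
    nlinarith [mul_le_mul_of_nonneg_left hw (mul_nonneg hU hV), sq_nonneg w,
      mul_le_mul_of_nonneg_right hau hU, mul_le_mul_of_nonneg_right hav hV,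
      mul_le_mul_of_nonneg_right haw hW, mul_le_mul_of_nonneg_left hw hS0,
      mul_nonneg (mul_nonneg hU hV) hW]
  have e1 : (|u| + |v|)^2 ≤ 4*(S*(|u| + |v|) + S + C) := by
    nlinarith [sq_nonneg (|u| - |v|)]
  have e2 : |u| + |v| ≤ 4*S^2 + 6*S + C + 1 := by
    nlinarith [sq_nonneg (|u| + |v| - 4*S - 2), mul_nonneg hS0 (add_nonneg hU hV)]
  nlinarith [mul_nonneg hS0 hS0]

lemma int_bound2 (S C au av aw b u v w : ℤ)
    (hS : |au| + |av| + |aw| ≤ S) (hC : |b| ≤ C)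
    (heq : u^2 + v^2 + w^2 + u*v*w - au*u - av*v - aw*w - b = 0)
    (hu : 2 ≤ |u|) (hv : 2 ≤ |v|) (hw : 2 ≤ |w|)
    (hp : |u * v| ≤ 3*S + 4) : |u| + |v| + |w| ≤ 6*S^2 + 30*S + 6*C + 60 := by
  have hS0 : 0 ≤ S := le_trans (by positivity) hS
  have hC0 : 0 ≤ C := le_trans (abs_nonneg b) hC
  have hUV : |u| * |v| ≤ 3*S + 4 := by rwa [← abs_mul]
  have hU : 2*|u| ≤ 3*S + 4 := by
    nlinarith [mul_le_mul_of_nonneg_left hv (abs_nonneg u)]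
  have hV : 2*|v| ≤ 3*S + 4 := by
    nlinarith [mul_le_mul_of_nonneg_left hu (abs_nonneg v)]
  have h1 : au*u ≤ |au| * |u| := le_trans (le_abs_self _) (le_of_eq (abs_mul _ _))
  have h2 : av*v ≤ |av| * |v| := le_trans (le_abs_self _) (le_of_eq (abs_mul _ _))
  have h3 : aw*w ≤ |aw| * |w| := le_trans (le_abs_self _) (le_of_eq (abs_mul _ _))
  have h4 : -(u*v*w) ≤ |u| * |v| * |w| := by
    rw [← abs_mul, ← abs_mul]; exact neg_le_abs _
  have h5 : b ≤ |b| := le_abs_self b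
  have hu2 : u^2 = |u|^2 := (sq_abs u).symm
  have hv2 : v^2 = |v|^2 := (sq_abs v).symm
  have hw2 : w^2 = |w|^2 := (sq_abs w).symm
  have hau : |au| ≤ S := by nlinarith [abs_nonneg av, abs_nonneg aw]
  have hav : |av| ≤ S := by nlinarith [abs_nonneg au, abs_nonneg aw]
  have haw : |aw| ≤ S := by nlinarith [abs_nonneg au, abs_nonneg av]
  have hkey : |w|^2 ≤ (4*S+4)*|w| + 3*S^2 + 4*S + C := by
    nlinarith [mul_le_mul_of_nonneg_right hUV (abs_nonneg w),
      mul_le_mul_of_nonneg_left hU hS0, mul_le_mul_of_nonneg_left hV hS0,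
      mul_le_mul_of_nonneg_right hau (abs_nonneg u),
      mul_le_mul_of_nonneg_right hav (abs_nonneg v),
      mul_le_mul_of_nonneg_right haw (abs_nonneg w), sq_nonneg u, sq_nonneg v]
  have hWb : |w| ≤ 5*S^2 + 9*S + C + 4 := by
    nlinarith [sq_nonneg (|w| - 4*S - 4), mul_nonneg hS0 (abs_nonneg w), mul_nonneg hS0 hS0]
  nlinarith [mul_nonneg hS0 hS0]

lemma perm3cases (σ : Equiv.Perm (Fin 3)) :
    (σ 0 = 0 ∧ σ 1 = 1 ∧ σ 2 = 2) ∨ (σ 0 = 0 ∧ σ 1 = 2 ∧ σ 2 = 1) ∨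
    (σ 0 = 1 ∧ σ 1 = 0 ∧ σ 2 = 2) ∨ (σ 0 = 1 ∧ σ 1 = 2 ∧ σ 2 = 0) ∨
    (σ 0 = 2 ∧ σ 1 = 0 ∧ σ 2 = 1) ∨ (σ 0 = 2 ∧ σ 1 = 1 ∧ σ 2 = 0) := by
  revert σ; decide

lemma notT_strong (α : Fin 3 → ℤ) (β : ℤ) (x : Fin 3 → ℤ)
    (hV : onV α β x) (hT : ¬ inT α β x) (i : Fin 3) :
    2 ≤ |x i| ∧ max (3 * |α i|) 4 < |x (i + 1) * x (i + 2)| := by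
  have h : ∀ σ : Equiv.Perm (Fin 3),
      1 < |x (σ 0)| ∧ max (3 * |α (σ 0)|) 4 < |x (σ 1) * x (σ 2)| := by
    intro σ
    by_contra hc
    push_neg at hc
    rcases le_or_gt (|x (σ 0)|) 1 with h1 | h1
    · exact hT ⟨hV, σ, Or.inl h1⟩
    · exact hT ⟨hV, σ, Or.inr (hc h1)⟩
  have h2 := h (Equiv.addLeft i)
  have e0 : (Equiv.addLeft i : Equiv.Perm (Fin 3)) 0 = i ∧
      (Equiv.addLeft i) 1 = i + 1 ∧ (Equiv.addLeft i) 2 = i + 2 := by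
    fin_cases i <;> exact ⟨rfl, rfl, rfl⟩
  rw [e0.1, e0.2.1, e0.2.2] at h2
  exact ⟨h2.1, h2.2⟩

lemma small_case (α : Fin 3 → ℤ) (β : ℤ) (x : Fin 3 → ℤ)
    (hV : onV α β x) (c : Fin 3) (h : |x c| ≤ 1) : delta x ≤ bigB α β := by
  unfold onV at hV
  unfold delta bigB
  fin_cases c
  · have := int_bound1 (|α 0| + |α 1| + |α 2|) (|β|) (α 1) (α 2) (α 0) β
      (x 1) (x 2) (x 0) (by linarith) (le_refl _) (by linear_combination hV) h
    linarith
  · have := int_bound1 (|α 0| + |α 1| + |α 2|) (|β|) (α 2) (α 0) (α 1) β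
      (x 2) (x 0) (x 1) (by linarith) (le_refl _) (by linear_combination hV) h
    linarith
  · have := int_bound1 (|α 0| + |α 1| + |α 2|) (|β|) (α 0) (α 1) (α 2) β
      (x 0) (x 1) (x 2) (by linarith) (le_refl _) (by linear_combination hV) h
    linarith

lemma max_le_3S4 (α : Fin 3 → ℤ) (c : Fin 3) :
    max (3 * |α c|) 4 ≤ 3 * (|α 0| + |α 1| + |α 2|) + 4 := by
  have h0 := abs_nonneg (α 0); have h1 := abs_nonneg (α 1); have h2 := abs_nonneg (α 2)
  apply max_le <;> fin_cases c <;> simp <;> linarith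

lemma inT_delta_le (α : Fin 3 → ℤ) (β : ℤ) (x : Fin 3 → ℤ)
    (hT : inT α β x) : delta x ≤ bigB α β := by
  obtain ⟨hV, σ, hd⟩ := hT
  rcases le_or_gt (|x 0|) 1 with h0 | h0
  · exact small_case α β x hV 0 h0
  rcases le_or_gt (|x 1|) 1 with h1 | h1
  · exact small_case α β x hV 1 h1
  rcases le_or_gt (|x 2|) 1 with h2 | h2
  · exact small_case α β x hV 2 h2
  have hV' := hV; unfold onV at hV'
  rcases perm3cases σ with ⟨e0,e1,e2⟩|⟨e0,e1,e2⟩|⟨e0,e1,e2⟩|⟨e0,e1,e2⟩|⟨e0,e1,e2⟩|⟨e0,e1,e2⟩ <;>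
    rw [e0, e1, e2] at hd <;>
    rcases hd with hs | hp
  · exact small_case α β x hV 0 hs
  · have := int_bound2 (|α 0| + |α 1| + |α 2|) (|β|) (α 1) (α 2) (α 0) β
      (x 1) (x 2) (x 0) (by linarith) (le_refl _) (by linear_combination hV')
      (by linarith) (by linarith) (by linarith) (le_trans hp (max_le_3S4 α 0))
    unfold delta bigB; linarith
  · exact small_case α β x hV 0 hs
  · have := int_bound2 (|α 0| + |α 1| + |α 2|) (|β|) (α 2) (α 1) (α 0) β
      (x 2) (x 1) (x 0) (by linarith) (le_refl _) (by linear_combination hV')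
      (by linarith) (by linarith) (by linarith) (le_trans hp (max_le_3S4 α 0))
    unfold delta bigB; linarith
  · exact small_case α β x hV 1 hs
  · have := int_bound2 (|α 0| + |α 1| + |α 2|) (|β|) (α 0) (α 2) (α 1) β
      (x 0) (x 2) (x 1) (by linarith) (le_refl _) (by linear_combination hV')
      (by linarith) (by linarith) (by linarith) (le_trans hp (max_le_3S4 α 1))
    unfold delta bigB; linarith
  · exact small_case α β x hV 1 hs
  · have := int_bound2 (|α 0| + |α 1| + |α 2|) (|β|) (α 2) (α 0) (α 1) β
      (x 2) (x 0) (x 1) (by linarith) (le_refl _) (by linear_combination hV')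
      (by linarith) (by linarith) (by linarith) (le_trans hp (max_le_3S4 α 1))
    unfold delta bigB; linarith
  · exact small_case α β x hV 2 hs
  · have := int_bound2 (|α 0| + |α 1| + |α 2|) (|β|) (α 0) (α 1) (α 2) β
      (x 0) (x 1) (x 2) (by linarith) (le_refl _) (by linear_combination hV')
      (by linarith) (by linarith) (by linarith) (le_trans hp (max_le_3S4 α 2))
    unfold delta bigB; linarith
  · exact small_case α β x hV 2 hs
  · have := int_bound2 (|α 0| + |α 1| + |α 2|) (|β|) (α 1) (α 0) (α 2) β
      (x 1) (x 0) (x 2) (by linarith) (le_refl _) (by linear_combination hV')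
      (by linarith) (by linarith) (by linarith) (le_trans hp (max_le_3S4 α 2))
    unfold delta bigB; linarith

lemma tri (a P x : ℤ) (h : |a - P - x| ≤ |x|) : |P| ≤ |a| + 2 * |x| := by
  have h1 : |P| - |a| ≤ |P - a| := abs_sub_abs_le_abs_sub P a
  have h2 : |P - a| = |a - P| := abs_sub_comm _ _
  have h3 : |a - P| ≤ |a - P - x| + |x| := by
    have h4 := abs_add_le (a - P - x) x
    rw [show a - P - x + x = a - P from by ring] at h4
    exact h4
  linarith

lemma third_eq_two (aU aV U V W : ℤ) (hU : 2 ≤ U) (hV : 2 ≤ V) (hW : 2 ≤ W)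
    (hUV : 4 < U * V) (h1 : 3 * aU < V * W) (k1 : V * W ≤ aU + 2 * U)
    (h2 : 3 * aV < W * U) (k2 : W * U ≤ aV + 2 * V) : W = 2 := by
  have e1 : V * W ≤ 3 * U - 1 := by linarith
  have e2 : W * U ≤ 3 * V - 1 := by linarith
  have hWle : W ≤ 2 := by
    by_contra hc
    push_neg at hc
    have h3 : 3 ≤ W := hc
    nlinarith [mul_le_mul e1 e2 (by nlinarith) (by linarith),
      mul_le_mul_of_nonneg_left (mul_le_mul h3 h3 (by norm_num) (by linarith) : (3:ℤ)*3 ≤ W*W) (by nlinarith : (0:ℤ) ≤ U*V)]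
  omega

lemma two_down_inU (α : Fin 3 → ℤ) (β : ℤ) (x : Fin 3 → ℤ)
    (hV : onV α β x) (hT : ¬ inT α β x) (a b : Fin 3) (hab : a ≠ b)
    (ha : delta (vAct α a x) ≤ delta x) (hb : delta (vAct α b x) ≤ delta x) :
    inU α β x := by
  have habs : ∀ i : Fin 3, delta (vAct α i x) ≤ delta x →
      |α i - x (i+1) * x (i+2) - x i| ≤ |x i| := by
    intro i hi
    rw [delta_vAct, delta_rot x i] at hi
    linarith
  fin_cases a <;> fin_cases b <;> first | exact absurd rfl hab | skip
  · -- a=0, b=1, c=2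
    have N0 : 2 ≤ |x 0| ∧ max (3 * |α 0|) 4 < |x 1 * x 2| := notT_strong α β x hV hT 0
    have N1 : 2 ≤ |x 1| ∧ max (3 * |α 1|) 4 < |x 2 * x 0| := notT_strong α β x hV hT 1
    have N2 : 2 ≤ |x 2| ∧ max (3 * |α 2|) 4 < |x 0 * x 1| := notT_strong α β x hV hT 2
    have ha' : |α 0 - x 1 * x 2 - x 0| ≤ |x 0| := habs 0 ha
    have hb' : |α 1 - x 2 * x 0 - x 1| ≤ |x 1| := habs 1 hb
    have k1 : |x 1 * x 2| ≤ |α 0| + 2 * |x 0| := tri _ _ _ ha'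
    have k2 : |x 2 * x 0| ≤ |α 1| + 2 * |x 1| := tri _ _ _ hb'
    have h1 : 3 * |α 0| < |x 1 * x 2| := lt_of_le_of_lt (le_max_left _ _) N0.2
    have h2 : 3 * |α 1| < |x 2 * x 0| := lt_of_le_of_lt (le_max_left _ _) N1.2
    have hUV : 4 < |x 0 * x 1| := lt_of_le_of_lt (le_max_right _ _) N2.2
    rw [abs_mul] at k1 k2 h1 h2 hUV
    have hW : |x 2| = 2 := third_eq_two (|α 0|) (|α 1|) (|x 0|) (|x 1|) (|x 2|) N0.1 N1.1 N2.1 hUV h1 k1 h2 k2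
    exact ⟨hV, hT, Equiv.ofBijective ![2,0,1] (by decide), by simpa using hW, by simpa using ha, by simpa using hb⟩
  · -- a=0, b=2, c=1
    have N0 : 2 ≤ |x 0| ∧ max (3 * |α 0|) 4 < |x 1 * x 2| := notT_strong α β x hV hT 0
    have N2 : 2 ≤ |x 2| ∧ max (3 * |α 2|) 4 < |x 0 * x 1| := notT_strong α β x hV hT 2
    have N1 : 2 ≤ |x 1| ∧ max (3 * |α 1|) 4 < |x 2 * x 0| := notT_strong α β x hV hT 1
    have ha' : |α 0 - x 1 * x 2 - x 0| ≤ |x 0| := habs 0 ha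
    have hb' : |α 2 - x 0 * x 1 - x 2| ≤ |x 2| := habs 2 hb
    have k1 : |x 1 * x 2| ≤ |α 0| + 2 * |x 0| := tri _ _ _ ha'
    have k2 : |x 0 * x 1| ≤ |α 2| + 2 * |x 2| := tri _ _ _ hb'
    have h1 : 3 * |α 0| < |x 1 * x 2| := lt_of_le_of_lt (le_max_left _ _) N0.2
    have h2 : 3 * |α 2| < |x 0 * x 1| := lt_of_le_of_lt (le_max_left _ _) N2.2
    have hUV : 4 < |x 2 * x 0| := lt_of_le_of_lt (le_max_right _ _) N1.2
    rw [abs_mul] at k1 k2 h1 h2 hUV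
    rw [mul_comm (|x 1|) (|x 2|)] at k1 h1
    rw [mul_comm (|x 0|) (|x 1|)] at k2 h2
    rw [mul_comm (|x 2|) (|x 0|)] at hUV
    have hW : |x 1| = 2 := third_eq_two (|α 0|) (|α 2|) (|x 0|) (|x 2|) (|x 1|) N0.1 N2.1 N1.1 hUV h1 k1 h2 k2
    exact ⟨hV, hT, Equiv.ofBijective ![1,0,2] (by decide), by simpa using hW, by simpa using ha, by simpa using hb⟩
  · -- a=1, b=0, c=2
    have N1 : 2 ≤ |x 1| ∧ max (3 * |α 1|) 4 < |x 2 * x 0| := notT_strong α β x hV hT 1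
    have N0 : 2 ≤ |x 0| ∧ max (3 * |α 0|) 4 < |x 1 * x 2| := notT_strong α β x hV hT 0
    have N2 : 2 ≤ |x 2| ∧ max (3 * |α 2|) 4 < |x 0 * x 1| := notT_strong α β x hV hT 2
    have ha' : |α 1 - x 2 * x 0 - x 1| ≤ |x 1| := habs 1 ha
    have hb' : |α 0 - x 1 * x 2 - x 0| ≤ |x 0| := habs 0 hb
    have k1 : |x 2 * x 0| ≤ |α 1| + 2 * |x 1| := tri _ _ _ ha'
    have k2 : |x 1 * x 2| ≤ |α 0| + 2 * |x 0| := tri _ _ _ hb'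
    have h1 : 3 * |α 1| < |x 2 * x 0| := lt_of_le_of_lt (le_max_left _ _) N1.2
    have h2 : 3 * |α 0| < |x 1 * x 2| := lt_of_le_of_lt (le_max_left _ _) N0.2
    have hUV : 4 < |x 0 * x 1| := lt_of_le_of_lt (le_max_right _ _) N2.2
    rw [abs_mul] at k1 k2 h1 h2 hUV
    rw [mul_comm (|x 2|) (|x 0|)] at k1 h1
    rw [mul_comm (|x 1|) (|x 2|)] at k2 h2
    rw [mul_comm (|x 0|) (|x 1|)] at hUV
    have hW : |x 2| = 2 := third_eq_two (|α 1|) (|α 0|) (|x 1|) (|x 0|) (|x 2|) N1.1 N0.1 N2.1 hUV h1 k1 h2 k2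
    exact ⟨hV, hT, Equiv.ofBijective ![2,1,0] (by decide), by simpa using hW, by simpa using ha, by simpa using hb⟩
  · -- a=1, b=2, c=0
    have N1 : 2 ≤ |x 1| ∧ max (3 * |α 1|) 4 < |x 2 * x 0| := notT_strong α β x hV hT 1
    have N2 : 2 ≤ |x 2| ∧ max (3 * |α 2|) 4 < |x 0 * x 1| := notT_strong α β x hV hT 2
    have N0 : 2 ≤ |x 0| ∧ max (3 * |α 0|) 4 < |x 1 * x 2| := notT_strong α β x hV hT 0
    have ha' : |α 1 - x 2 * x 0 - x 1| ≤ |x 1| := habs 1 ha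
    have hb' : |α 2 - x 0 * x 1 - x 2| ≤ |x 2| := habs 2 hb
    have k1 : |x 2 * x 0| ≤ |α 1| + 2 * |x 1| := tri _ _ _ ha'
    have k2 : |x 0 * x 1| ≤ |α 2| + 2 * |x 2| := tri _ _ _ hb'
    have h1 : 3 * |α 1| < |x 2 * x 0| := lt_of_le_of_lt (le_max_left _ _) N1.2
    have h2 : 3 * |α 2| < |x 0 * x 1| := lt_of_le_of_lt (le_max_left _ _) N2.2
    have hUV : 4 < |x 1 * x 2| := lt_of_le_of_lt (le_max_right _ _) N0.2
    rw [abs_mul] at k1 k2 h1 h2 hUV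
    have hW : |x 0| = 2 := third_eq_two (|α 1|) (|α 2|) (|x 1|) (|x 2|) (|x 0|) N1.1 N2.1 N0.1 hUV h1 k1 h2 k2
    exact ⟨hV, hT, Equiv.ofBijective ![0,1,2] (by decide), by simpa using hW, by simpa using ha, by simpa using hb⟩
  · -- a=2, b=0, c=1
    have N2 : 2 ≤ |x 2| ∧ max (3 * |α 2|) 4 < |x 0 * x 1| := notT_strong α β x hV hT 2
    have N0 : 2 ≤ |x 0| ∧ max (3 * |α 0|) 4 < |x 1 * x 2| := notT_strong α β x hV hT 0
    have N1 : 2 ≤ |x 1| ∧ max (3 * |α 1|) 4 < |x 2 * x 0| := notT_strong α β x hV hT 1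
    have ha' : |α 2 - x 0 * x 1 - x 2| ≤ |x 2| := habs 2 ha
    have hb' : |α 0 - x 1 * x 2 - x 0| ≤ |x 0| := habs 0 hb
    have k1 : |x 0 * x 1| ≤ |α 2| + 2 * |x 2| := tri _ _ _ ha'
    have k2 : |x 1 * x 2| ≤ |α 0| + 2 * |x 0| := tri _ _ _ hb'
    have h1 : 3 * |α 2| < |x 0 * x 1| := lt_of_le_of_lt (le_max_left _ _) N2.2
    have h2 : 3 * |α 0| < |x 1 * x 2| := lt_of_le_of_lt (le_max_left _ _) N0.2
    have hUV : 4 < |x 2 * x 0| := lt_of_le_of_lt (le_max_right _ _) N1.2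
    rw [abs_mul] at k1 k2 h1 h2 hUV
    have hW : |x 1| = 2 := third_eq_two (|α 2|) (|α 0|) (|x 2|) (|x 0|) (|x 1|) N2.1 N0.1 N1.1 hUV h1 k1 h2 k2
    exact ⟨hV, hT, Equiv.ofBijective ![1,2,0] (by decide), by simpa using hW, by simpa using ha, by simpa using hb⟩
  · -- a=2, b=1, c=0
    have N2 : 2 ≤ |x 2| ∧ max (3 * |α 2|) 4 < |x 0 * x 1| := notT_strong α β x hV hT 2
    have N1 : 2 ≤ |x 1| ∧ max (3 * |α 1|) 4 < |x 2 * x 0| := notT_strong α β x hV hT 1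
    have N0 : 2 ≤ |x 0| ∧ max (3 * |α 0|) 4 < |x 1 * x 2| := notT_strong α β x hV hT 0
    have ha' : |α 2 - x 0 * x 1 - x 2| ≤ |x 2| := habs 2 ha
    have hb' : |α 1 - x 2 * x 0 - x 1| ≤ |x 1| := habs 1 hb
    have k1 : |x 0 * x 1| ≤ |α 2| + 2 * |x 2| := tri _ _ _ ha'
    have k2 : |x 2 * x 0| ≤ |α 1| + 2 * |x 1| := tri _ _ _ hb'
    have h1 : 3 * |α 2| < |x 0 * x 1| := lt_of_le_of_lt (le_max_left _ _) N2.2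
    have h2 : 3 * |α 1| < |x 2 * x 0| := lt_of_le_of_lt (le_max_left _ _) N1.2
    have hUV : 4 < |x 1 * x 2| := lt_of_le_of_lt (le_max_right _ _) N0.2
    rw [abs_mul] at k1 k2 h1 h2 hUV
    rw [mul_comm (|x 0|) (|x 1|)] at k1 h1
    rw [mul_comm (|x 2|) (|x 0|)] at k2 h2
    rw [mul_comm (|x 1|) (|x 2|)] at hUV
    have hW : |x 0| = 2 := third_eq_two (|α 2|) (|α 1|) (|x 2|) (|x 1|) (|x 0|) N2.1 N1.1 N0.1 hUV h1 k1 h2 k2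
    exact ⟨hV, hT, Equiv.ofBijective ![0,2,1] (by decide), by simpa using hW, by simpa using ha, by simpa using hb⟩

lemma coreU_tail (S C aa ab ac b k u v q m : ℤ)
    (hS : |aa| + |ab| + |ac| ≤ S) (hC : |b| ≤ C)
    (hq : 2 * |q| ≤ |aa| + |ab|) (hv : |v| ≤ |q| + |u|)
    (hm : k * u = m) (hmb : |m| ≤ |q|^2 + |ab| * |q| + 2 * |ac| + |b| + 4)
    (hk : k ≠ 0) : |u| + |v| ≤ 4*S^2 + 5*S + 2*C + 12 := by
  have h1 : 1 ≤ |k| := Int.one_le_abs hk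
  have h2 : |u| ≤ |m| := by
    calc |u| = 1 * |u| := (one_mul _).symm
    _ ≤ |k| * |u| := mul_le_mul_of_nonneg_right h1 (abs_nonneg u)
    _ = |k * u| := (abs_mul k u).symm
    _ = |m| := by rw [hm]
  have hS0 : 0 ≤ S := le_trans (by positivity) hS
  have haa : 0 ≤ |aa| := abs_nonneg aa
  have hab : 0 ≤ |ab| := abs_nonneg ab
  have hac : 0 ≤ |ac| := abs_nonneg ac
  have hqq : 0 ≤ |q| := abs_nonneg q
  have e1 : 4 * |q|^2 ≤ S^2 := by nlinarith
  have e2 : 2 * (|ab| * |q|) ≤ S * S := by nlinarith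
  nlinarith

lemma coreU (S C aa ab ac b u v w : ℤ)
    (hS : |aa| + |ab| + |ac| ≤ S) (hC : |b| ≤ C)
    (hw : w = 2 ∨ w = -2)
    (h2u : 2 ≤ |u|) (h2v : 2 ≤ |v|)
    (ha : 3 * |aa| < 2 * |v|)
    (hb : 3 * |ab| < 2 * |u|)
    (hVa : |aa - v * w - u| ≤ |u|)
    (hVb : |ab - u * w - v| ≤ |v|)
    (heq : u^2 + v^2 + w^2 + u*v*w - aa*u - ab*v - ac*w - b = 0) :
    (aa - v*w - u = u ∧ ab - u*w - v = v) ∨ |u| + |v| ≤ 4*S^2 + 5*S + 2*C + 12 := by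
  obtain ⟨la, ra⟩ := abs_le.mp hVa
  obtain ⟨lb, rb⟩ := abs_le.mp hVb
  have hsu : u ≤ -2 ∨ 2 ≤ u := by
    rcases le_or_gt u 0 with h | h
    · left; rw [abs_of_nonpos h] at h2u; linarith
    · right; rw [abs_of_pos h] at h2u; linarith
  have hsv : v ≤ -2 ∨ 2 ≤ v := by
    rcases le_or_gt v 0 with h | h
    · left; rw [abs_of_nonpos h] at h2v; linarith
    · right; rw [abs_of_pos h] at h2v; linarith
  have hvb1 : |v| ≤ |u + v| + |u| := by
    have h := abs_add_le (u + v) (-u)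
    rw [abs_neg] at h
    rw [show u + v + -u = v from by ring] at h
    exact h
  have hvb2 : |v| ≤ |u - v| + |u| := by
    have h := abs_add_le (-(u - v)) u
    rw [abs_neg] at h
    rw [show -(u - v) + u = v from by ring] at h
    exact h
  rcases hw with hw | hw <;> subst hw
  · -- w = 2
    rcases hsu with hu | hu <;> rcases hsv with hv | hv
    · -- u ≤ -2, v ≤ -2 : contradiction
      exfalso
      have AU : |u| = -u := abs_of_nonpos (by linarith)
      have AV : |v| = -v := abs_of_nonpos (by linarith)
      linarith [neg_abs_le ab]
    · -- u ≤ -2, v ≥ 2 : sandwich ab ≤ 2q ≤ aa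
      have AU : |u| = -u := abs_of_nonpos (by linarith)
      have AV : |v| = v := abs_of_nonneg (by linarith)
      have s1 : ab ≤ 2*(u+v) := by linarith
      have s2 : 2*(u+v) ≤ aa := by linarith
      by_cases hk : aa - ab = 0
      · left; constructor <;> linarith
      · right
        have hq : 2 * |u + v| ≤ |aa| + |ab| := by
          rcases abs_cases (u + v) with ⟨h, _⟩ | ⟨h, _⟩ <;> rw [h] <;>
            linarith [le_abs_self aa, neg_abs_le ab, le_abs_self ab, neg_abs_le aa]
        refine coreU_tail S C aa ab ac b (aa - ab) u v (u+v) ((u+v)^2 - ab*(u+v) - 2*ac - b + 4) hS hC hq hvb1 (by linear_combination -heq) ?_ hk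
        apply abs_le.mpr
        constructor <;> nlinarith [sq_abs (u+v), le_abs_self (ab*(u+v)), neg_abs_le (ab*(u+v)), abs_mul ab (u+v), le_abs_self ac, neg_abs_le ac, le_abs_self b, neg_abs_le b]
    · -- u ≥ 2, v ≤ -2 : sandwich aa ≤ 2q ≤ ab
      have AU : |u| = u := abs_of_nonneg (by linarith)
      have AV : |v| = -v := abs_of_nonpos (by linarith)
      have s1 : aa ≤ 2*(u+v) := by linarith
      have s2 : 2*(u+v) ≤ ab := by linarith
      by_cases hk : aa - ab = 0
      · left; constructor <;> linarith
      · right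
        have hq : 2 * |u + v| ≤ |aa| + |ab| := by
          rcases abs_cases (u + v) with ⟨h, _⟩ | ⟨h, _⟩ <;> rw [h] <;>
            linarith [le_abs_self aa, neg_abs_le ab, le_abs_self ab, neg_abs_le aa]
        refine coreU_tail S C aa ab ac b (aa - ab) u v (u+v) ((u+v)^2 - ab*(u+v) - 2*ac - b + 4) hS hC hq hvb1 (by linear_combination -heq) ?_ hk
        apply abs_le.mpr
        constructor <;> nlinarith [sq_abs (u+v), le_abs_self (ab*(u+v)), neg_abs_le (ab*(u+v)), abs_mul ab (u+v), le_abs_self ac, neg_abs_le ac, le_abs_self b, neg_abs_le b]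
    · -- u ≥ 2, v ≥ 2 : contradiction
      exfalso
      have AU : |u| = u := abs_of_nonneg (by linarith)
      have AV : |v| = v := abs_of_nonneg (by linarith)
      linarith [le_abs_self ab]
  · -- w = -2
    rcases hsu with hu | hu <;> rcases hsv with hv | hv
    · -- u ≤ -2, v ≤ -2 : sandwich -ab ≤ 2q ≤ aa, q = u - v
      have AU : |u| = -u := abs_of_nonpos (by linarith)
      have AV : |v| = -v := abs_of_nonpos (by linarith)
      have s1 : -ab ≤ 2*(u-v) := by linarith
      have s2 : 2*(u-v) ≤ aa := by linarith
      by_cases hk : aa + ab = 0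
      · left; constructor <;> linarith
      · right
        have hq : 2 * |u - v| ≤ |aa| + |ab| := by
          rcases abs_cases (u - v) with ⟨h, _⟩ | ⟨h, _⟩ <;> rw [h] <;>
            linarith [le_abs_self aa, neg_abs_le ab, le_abs_self ab, neg_abs_le aa]
        refine coreU_tail S C aa ab ac b (aa + ab) u v (u-v) ((u-v)^2 + ab*(u-v) + 2*ac - b + 4) hS hC hq hvb2 (by linear_combination -heq) ?_ hk
        apply abs_le.mpr
        constructor <;> nlinarith [sq_abs (u-v), le_abs_self (ab*(u-v)), neg_abs_le (ab*(u-v)), abs_mul ab (u-v), le_abs_self ac, neg_abs_le ac, le_abs_self b, neg_abs_le b]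
    · -- u ≤ -2, v ≥ 2 : contradiction
      exfalso
      have AU : |u| = -u := abs_of_nonpos (by linarith)
      have AV : |v| = v := abs_of_nonneg (by linarith)
      linarith [le_abs_self ab]
    · -- u ≥ 2, v ≤ -2 : contradiction
      exfalso
      have AU : |u| = u := abs_of_nonneg (by linarith)
      have AV : |v| = -v := abs_of_nonpos (by linarith)
      linarith [le_abs_self aa]
    · -- u ≥ 2, v ≥ 2 : sandwich aa ≤ 2q ≤ -ab, q = u - v
      have AU : |u| = u := abs_of_nonneg (by linarith)
      have AV : |v| = v := abs_of_nonneg (by linarith)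
      have s1 : aa ≤ 2*(u-v) := by linarith
      have s2 : 2*(u-v) ≤ -ab := by linarith
      by_cases hk : aa + ab = 0
      · left; constructor <;> linarith
      · right
        have hq : 2 * |u - v| ≤ |aa| + |ab| := by
          rcases abs_cases (u - v) with ⟨h, _⟩ | ⟨h, _⟩ <;> rw [h] <;>
            linarith [le_abs_self aa, neg_abs_le ab, le_abs_self ab, neg_abs_le aa]
        refine coreU_tail S C aa ab ac b (aa + ab) u v (u-v) ((u-v)^2 + ab*(u-v) + 2*ac - b + 4) hS hC hq hvb2 (by linear_combination -heq) ?_ hk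
        apply abs_le.mpr
        constructor <;> nlinarith [sq_abs (u-v), le_abs_self (ab*(u-v)), neg_abs_le (ab*(u-v)), abs_mul ab (u-v), le_abs_self ac, neg_abs_le ac, le_abs_self b, neg_abs_le b]

lemma rev_tri (a P x : ℤ) : |P| - |a| - |x| ≤ |a - P - x| := by
  have h1 := abs_add_le (-(a - P - x)) (a - x)
  rw [abs_neg, show -(a - P - x) + (a - x) = P from by ring] at h1
  have h2 := abs_add_le a (-x)
  rw [abs_neg, show a + -x = a - x from by ring] at h2
  linarith

lemma inU_struct_c (α : Fin 3 → ℤ) (β : ℤ) (z : Fin 3 → ℤ)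
    (hV : onV α β z) (hT : ¬ inT α β z) (c : Fin 3) (h2 : |z c| = 2)
    (hA : delta (vAct α (c+1) z) ≤ delta z) (hB : delta (vAct α (c+2) z) ≤ delta z)
    (hbig : bigB α β < delta z) :
    vAct α (c+1) z = z ∧ vAct α (c+2) z = z ∧ delta z ≤ delta (vAct α c z) := by
  have hV' := hV; unfold onV at hV'
  have habs : ∀ i : Fin 3, delta (vAct α i z) ≤ delta z →
      |α i - z (i+1) * z (i+2) - z i| ≤ |z i| := by
    intro i hi
    rw [delta_vAct, delta_rot z i] at hi
    linarith
  fin_cases c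
  · -- c = 0
    have h2' : |z 0| = 2 := h2
    have hA0 : delta (vAct α 1 z) ≤ delta z := hA
    have hB0 : delta (vAct α 2 z) ≤ delta z := hB
    have N0 : 2 ≤ |z 0| ∧ max (3 * |α 0|) 4 < |z 1 * z 2| := notT_strong α β z hV hT 0
    have N1 : 2 ≤ |z 1| ∧ max (3 * |α 1|) 4 < |z 2 * z 0| := notT_strong α β z hV hT 1
    have N2 : 2 ≤ |z 2| ∧ max (3 * |α 2|) 4 < |z 0 * z 1| := notT_strong α β z hV hT 2
    have hA' : |α 1 - z 2 * z 0 - z 1| ≤ |z 1| := habs 1 hA0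
    have hB' : |α 2 - z 0 * z 1 - z 2| ≤ |z 2| := habs 2 hB0
    rw [mul_comm (z 0) (z 1)] at hB'
    have hw : z 0 = 2 ∨ z 0 = -2 := by
      rcases abs_cases (z 0) with ⟨h, _⟩ | ⟨h, _⟩
      · left; linarith [h2' ▸ h]
      · right; linarith [h2' ▸ h]
    have ha2 : 3 * |α 1| < 2 * |z 2| := by
      have h := lt_of_le_of_lt (le_max_left _ _) N1.2
      rw [abs_mul, h2'] at h <;> linarith
    have hb2 : 3 * |α 2| < 2 * |z 1| := by
      have h := lt_of_le_of_lt (le_max_left _ _) N2.2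
      rw [abs_mul, h2'] at h <;> linarith
    have heq2 : (z 1)^2 + (z 2)^2 + (z 0)^2 + z 1 * z 2 * z 0 - α 1 * z 1 - α 2 * z 2 - α 0 * z 0 - β = 0 := by linear_combination hV'
    have hSS : |α 1| + |α 2| + |α 0| ≤ |α 0| + |α 1| + |α 2| := by linarith
    rcases coreU (|α 0| + |α 1| + |α 2|) (|β|) (α 1) (α 2) (α 0) β (z 1) (z 2) (z 0) hSS (le_refl _) hw N1.1 N2.1 ha2 hb2 hA' hB' heq2 with ⟨f1, f2⟩ | hsmall
    · refine ⟨?_, ?_, ?_⟩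
      · show Function.update z 1 (α 1 - z 2 * z 0 - z 1) = z
        rw [Function.update_eq_self_iff]
        linear_combination f1
      · show Function.update z 2 (α 2 - z 0 * z 1 - z 2) = z
        rw [Function.update_eq_self_iff]
        linear_combination f2
      · have e1 : delta (vAct α 0 z) = |α 0 - z 1 * z 2 - z 0| + |z 1| + |z 2| := delta_vAct α 0 z
        have e2 : delta z = |z 0| + |z 1| + |z 2| := delta_rot z 0
        have e3 := rev_tri (α 0) (z 1 * z 2) (z 0)
        have e4 : 3 * |α 0| < |z 1 * z 2| := lt_of_le_of_lt (le_max_left _ _) N0.2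
        have e5 : 4 < |z 1 * z 2| := lt_of_le_of_lt (le_max_right _ _) N0.2
        have e6 : 2 ≤ |α 0 - z 1 * z 2 - z 0| := by
          rcases lt_or_ge (|α 0 - z 1 * z 2 - z 0|) 2 with h | h
          · exfalso; have h7 := Int.lt_iff_add_one_le.mp h; linarith
          · exact h
        show delta z ≤ delta (vAct α 0 z)
        rw [e1, e2]
        linarith
    · exfalso
      have hd : delta z = |z 0| + |z 1| + |z 2| := rfl
      unfold bigB at hbig
      nlinarith [abs_nonneg (α 0), abs_nonneg (α 1), abs_nonneg (α 2), abs_nonneg β, sq_nonneg (|α 0| + |α 1| + |α 2|)]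
  · -- c = 1
    have h2' : |z 1| = 2 := h2
    have hA0 : delta (vAct α 2 z) ≤ delta z := hA
    have hB0 : delta (vAct α 0 z) ≤ delta z := hB
    have N0 : 2 ≤ |z 0| ∧ max (3 * |α 0|) 4 < |z 1 * z 2| := notT_strong α β z hV hT 0
    have N1 : 2 ≤ |z 1| ∧ max (3 * |α 1|) 4 < |z 2 * z 0| := notT_strong α β z hV hT 1
    have N2 : 2 ≤ |z 2| ∧ max (3 * |α 2|) 4 < |z 0 * z 1| := notT_strong α β z hV hT 2
    have hA' : |α 2 - z 0 * z 1 - z 2| ≤ |z 2| := habs 2 hA0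
    have hB' : |α 0 - z 1 * z 2 - z 0| ≤ |z 0| := habs 0 hB0
    rw [mul_comm (z 1) (z 2)] at hB'
    have hw : z 1 = 2 ∨ z 1 = -2 := by
      rcases abs_cases (z 1) with ⟨h, _⟩ | ⟨h, _⟩
      · left; linarith [h2' ▸ h]
      · right; linarith [h2' ▸ h]
    have ha2 : 3 * |α 2| < 2 * |z 0| := by
      have h := lt_of_le_of_lt (le_max_left _ _) N2.2
      rw [abs_mul, h2'] at h <;> linarith
    have hb2 : 3 * |α 0| < 2 * |z 2| := by
      have h := lt_of_le_of_lt (le_max_left _ _) N0.2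
      rw [abs_mul, h2'] at h <;> linarith
    have heq2 : (z 2)^2 + (z 0)^2 + (z 1)^2 + z 2 * z 0 * z 1 - α 2 * z 2 - α 0 * z 0 - α 1 * z 1 - β = 0 := by linear_combination hV'
    have hSS : |α 2| + |α 0| + |α 1| ≤ |α 0| + |α 1| + |α 2| := by linarith
    rcases coreU (|α 0| + |α 1| + |α 2|) (|β|) (α 2) (α 0) (α 1) β (z 2) (z 0) (z 1) hSS (le_refl _) hw N2.1 N0.1 ha2 hb2 hA' hB' heq2 with ⟨f1, f2⟩ | hsmall
    · refine ⟨?_, ?_, ?_⟩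
      · show Function.update z 2 (α 2 - z 0 * z 1 - z 2) = z
        rw [Function.update_eq_self_iff]
        linear_combination f1
      · show Function.update z 0 (α 0 - z 1 * z 2 - z 0) = z
        rw [Function.update_eq_self_iff]
        linear_combination f2
      · have e1 : delta (vAct α 1 z) = |α 1 - z 2 * z 0 - z 1| + |z 2| + |z 0| := delta_vAct α 1 z
        have e2 : delta z = |z 1| + |z 2| + |z 0| := delta_rot z 1
        have e3 := rev_tri (α 1) (z 2 * z 0) (z 1)
        have e4 : 3 * |α 1| < |z 2 * z 0| := lt_of_le_of_lt (le_max_left _ _) N1.2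
        have e5 : 4 < |z 2 * z 0| := lt_of_le_of_lt (le_max_right _ _) N1.2
        have e6 : 2 ≤ |α 1 - z 2 * z 0 - z 1| := by
          rcases lt_or_ge (|α 1 - z 2 * z 0 - z 1|) 2 with h | h
          · exfalso; have h7 := Int.lt_iff_add_one_le.mp h; linarith
          · exact h
        show delta z ≤ delta (vAct α 1 z)
        rw [e1, e2]
        linarith
    · exfalso
      have hd : delta z = |z 0| + |z 1| + |z 2| := rfl
      unfold bigB at hbig
      nlinarith [abs_nonneg (α 0), abs_nonneg (α 1), abs_nonneg (α 2), abs_nonneg β, sq_nonneg (|α 0| + |α 1| + |α 2|)]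
  · -- c = 2
    have h2' : |z 2| = 2 := h2
    have hA0 : delta (vAct α 0 z) ≤ delta z := hA
    have hB0 : delta (vAct α 1 z) ≤ delta z := hB
    have N0 : 2 ≤ |z 0| ∧ max (3 * |α 0|) 4 < |z 1 * z 2| := notT_strong α β z hV hT 0
    have N1 : 2 ≤ |z 1| ∧ max (3 * |α 1|) 4 < |z 2 * z 0| := notT_strong α β z hV hT 1
    have N2 : 2 ≤ |z 2| ∧ max (3 * |α 2|) 4 < |z 0 * z 1| := notT_strong α β z hV hT 2
    have hA' : |α 0 - z 1 * z 2 - z 0| ≤ |z 0| := habs 0 hA0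
    have hB' : |α 1 - z 2 * z 0 - z 1| ≤ |z 1| := habs 1 hB0
    rw [mul_comm (z 2) (z 0)] at hB'
    have hw : z 2 = 2 ∨ z 2 = -2 := by
      rcases abs_cases (z 2) with ⟨h, _⟩ | ⟨h, _⟩
      · left; linarith [h2' ▸ h]
      · right; linarith [h2' ▸ h]
    have ha2 : 3 * |α 0| < 2 * |z 1| := by
      have h := lt_of_le_of_lt (le_max_left _ _) N0.2
      rw [abs_mul, h2'] at h <;> linarith
    have hb2 : 3 * |α 1| < 2 * |z 0| := by
      have h := lt_of_le_of_lt (le_max_left _ _) N1.2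
      rw [abs_mul, h2'] at h <;> linarith
    have heq2 : (z 0)^2 + (z 1)^2 + (z 2)^2 + z 0 * z 1 * z 2 - α 0 * z 0 - α 1 * z 1 - α 2 * z 2 - β = 0 := by linear_combination hV'
    have hSS : |α 0| + |α 1| + |α 2| ≤ |α 0| + |α 1| + |α 2| := by linarith
    rcases coreU (|α 0| + |α 1| + |α 2|) (|β|) (α 0) (α 1) (α 2) β (z 0) (z 1) (z 2) hSS (le_refl _) hw N0.1 N1.1 ha2 hb2 hA' hB' heq2 with ⟨f1, f2⟩ | hsmall
    · refine ⟨?_, ?_, ?_⟩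
      · show Function.update z 0 (α 0 - z 1 * z 2 - z 0) = z
        rw [Function.update_eq_self_iff]
        linear_combination f1
      · show Function.update z 1 (α 1 - z 2 * z 0 - z 1) = z
        rw [Function.update_eq_self_iff]
        linear_combination f2
      · have e1 : delta (vAct α 2 z) = |α 2 - z 0 * z 1 - z 2| + |z 0| + |z 1| := delta_vAct α 2 z
        have e2 : delta z = |z 2| + |z 0| + |z 1| := delta_rot z 2
        have e3 := rev_tri (α 2) (z 0 * z 1) (z 2)
        have e4 : 3 * |α 2| < |z 0 * z 1| := lt_of_le_of_lt (le_max_left _ _) N2.2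
        have e5 : 4 < |z 0 * z 1| := lt_of_le_of_lt (le_max_right _ _) N2.2
        have e6 : 2 ≤ |α 2 - z 0 * z 1 - z 2| := by
          rcases lt_or_ge (|α 2 - z 0 * z 1 - z 2|) 2 with h | h
          · exfalso; have h7 := Int.lt_iff_add_one_le.mp h; linarith
          · exact h
        show delta z ≤ delta (vAct α 2 z)
        rw [e1, e2]
        linarith
    · exfalso
      have hd : delta z = |z 0| + |z 1| + |z 2| := rfl
      unfold bigB at hbig
      nlinarith [abs_nonneg (α 0), abs_nonneg (α 1), abs_nonneg (α 2), abs_nonneg β, sq_nonneg (|α 0| + |α 1| + |α 2|)]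

lemma fin3cases (c k : Fin 3) : k = c ∨ k = c + 1 ∨ k = c + 2 := by revert c k; decide

lemma inU_structure (α : Fin 3 → ℤ) (β : ℤ) (z : Fin 3 → ℤ)
    (hz : inU α β z) (hbig : bigB α β < delta z) :
    ∃ c : Fin 3, vAct α (c+1) z = z ∧ vAct α (c+2) z = z ∧
      delta z ≤ delta (vAct α c z) := by
  obtain ⟨hV, hT, σ, h2, hda, hdb⟩ := hz
  rcases perm3cases σ with ⟨e0,e1,e2⟩|⟨e0,e1,e2⟩|⟨e0,e1,e2⟩|⟨e0,e1,e2⟩|⟨e0,e1,e2⟩|⟨e0,e1,e2⟩ <;>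
    rw [e0] at h2 <;> rw [e1] at hda <;> rw [e2] at hdb
  · exact ⟨0, inU_struct_c α β z hV hT 0 h2 hda hdb hbig⟩
  · exact ⟨0, inU_struct_c α β z hV hT 0 h2 hdb hda hbig⟩
  · exact ⟨1, inU_struct_c α β z hV hT 1 h2 hdb hda hbig⟩
  · exact ⟨1, inU_struct_c α β z hV hT 1 h2 hda hdb hbig⟩
  · exact ⟨2, inU_struct_c α β z hV hT 2 h2 hda hdb hbig⟩
  · exact ⟨2, inU_struct_c α β z hV hT 2 h2 hdb hda hbig⟩

lemma inU_noinc (α : Fin 3 → ℤ) (β : ℤ) (z : Fin 3 → ℤ)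
    (hz : inU α β z) (hbig : bigB α β < delta z) (k : Fin 3) :
    delta z ≤ delta (vAct α k z) := by
  obtain ⟨c, f1, f2, f3⟩ := inU_structure α β z hz hbig
  rcases fin3cases c k with rfl | e | e
  · exact f3
  · rw [e, f1]
  · rw [e, f2]

section ReachSec
variable (α : Fin 3 → ℤ) (β : ℤ) (y : Fin 3 → ℤ) (c : Fin 3)

inductive Reach : (Fin 3 → ℤ) → Prop
  | base : Reach y
  | base' : Reach (vAct α c y)
  | up (z : Fin 3 → ℤ) (k : Fin 3) (hz : Reach z)
      (h : delta z < delta (vAct α k z)) : Reach (vAct α k z)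

variable {α β y c}
variable (hVy : onV α β y) (hUy : inU α β y) (hby : bigB α β < delta y)
variable (f1 : vAct α (c+1) y = y) (f2 : vAct α (c+2) y = y)
variable (f3 : delta y ≤ delta (vAct α c y))

include hVy f3 in
lemma reach_onV_delta : ∀ z, Reach α y c z → onV α β z ∧ delta y ≤ delta z := by
  intro z hz
  induction hz with
  | base => exact ⟨hVy, le_refl _⟩
  | base' => exact ⟨onV_vAct _ _ _ _ hVy, f3⟩
  | up z k hz h ih => exact ⟨onV_vAct _ _ _ _ ih.1, le_trans ih.2 (le_of_lt h)⟩

include hVy hUy hby f1 f2 f3 in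
lemma reach_closed : ∀ z, Reach α y c z → ∀ k, Reach α y c (vAct α k z) := by
  have notT_of_big : ∀ w, bigB α β < delta w → ¬ inT α β w := by
    intro w hw hT
    exact absurd (inT_delta_le α β w hT) (not_le.mpr hw)
  intro z hz
  induction hz with
  | base =>
    intro k
    rcases fin3cases c k with rfl | e | e
    · exact Reach.base'
    · rw [e, f1]; exact Reach.base
    · rw [e, f2]; exact Reach.base
  | base' =>
    intro k
    by_cases hyy : vAct α c y = y
    · rw [hyy]
      rcases fin3cases c k with rfl | e | e
      · exact Reach.base'
      · rw [e, f1]; exact Reach.base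
      · rw [e, f2]; exact Reach.base
    · have hdy' : delta y ≤ delta (vAct α c y) := f3
      have hVy' : onV α β (vAct α c y) := onV_vAct _ _ _ _ hVy
      have hby' : bigB α β < delta (vAct α c y) := lt_of_lt_of_le hby hdy'
      by_cases hU' : inU α β (vAct α c y)
      · obtain ⟨c', g1, g2, g3⟩ := inU_structure α β _ hU' hby'
        have hcc : c' = c := by
          rcases fin3cases c' c with rfl | e | e
          · rfl
          · exfalso; apply hyy
            have h2 := g1; rw [← e] at h2
            rw [vAct_invol] at h2
            exact h2.symm
          · exfalso; apply hyy
            have h2 := g2; rw [← e] at h2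
            rw [vAct_invol] at h2
            exact h2.symm
        subst hcc
        rcases fin3cases c' k with rfl | e | e
        · rw [vAct_invol]; exact Reach.base
        · rw [e, g1]; exact Reach.base'
        · rw [e, g2]; exact Reach.base'
      · rcases fin3cases c k with rfl | e | e
        · rw [vAct_invol]; exact Reach.base
        all_goals {
          have hlt : delta (vAct α c y) < delta (vAct α k (vAct α c y)) := by
            by_contra h
            push_neg at h
            apply hU'
            refine two_down_inU α β _ hVy' (notT_of_big _ hby') k c ?_ h ?_
            · rw [e]; simp
            · rw [vAct_invol]; exact hdy'
          exact Reach.up _ k Reach.base' hlt }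
  | up z k hz hlt ih =>
    intro m
    rcases eq_or_ne m k with rfl | hne
    · rw [vAct_invol]; exact hz
    · have hinv := reach_onV_delta hVy f3 _ (Reach.up z k hz hlt)
      have hbz' : bigB α β < delta (vAct α k z) := by
        have h9 := (reach_onV_delta hVy f3 _ hz).2
        linarith
      have hnU : ¬ inU α β (vAct α k z) := by
        intro hU
        have := inU_noinc α β _ hU hbz' k
        rw [vAct_invol] at this
        linarith
      have hm : delta (vAct α k z) < delta (vAct α m (vAct α k z)) := by
        by_contra h
        push_neg at h
        apply hnU
        refine two_down_inU α β _ hinv.1 (notT_of_big _ hbz') m k hne h ?_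
        rw [vAct_invol]; linarith
      exact Reach.up _ m (Reach.up z k hz hlt) hm

include hVy hby f3 in
lemma reach_inU : ∀ z, Reach α y c z → inU α β z → z = y ∨ z = vAct α c y := by
  intro z hz
  induction hz with
  | base => intro _; left; rfl
  | base' => intro _; right; rfl
  | up z k hz hlt _ =>
    intro hU
    exfalso
    have hbz' : bigB α β < delta (vAct α k z) := by
      have h9 := (reach_onV_delta hVy f3 _ hz).2; linarith
    have := inU_noinc α β _ hU hbz' k
    rw [vAct_invol] at this
    linarith

end ReachSec

lemma foldl_reach (α : Fin 3 → ℤ) (β : ℤ) (y : Fin 3 → ℤ) (c : Fin 3)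
    (hVy : onV α β y) (hUy : inU α β y) (hby : bigB α β < delta y)
    (f1 : vAct α (c+1) y = y) (f2 : vAct α (c+2) y = y)
    (f3 : delta y ≤ delta (vAct α c y)) :
    ∀ L : List (Fin 3), ∀ z, Reach α y c z →
      Reach α y c (L.foldl (fun w i => vAct α i w) z) := by
  intro L
  induction L with
  | nil => intro z hz; exact hz
  | cons a L ih =>
    intro z hz
    exact ih _ (reach_closed hVy hUy hby f1 f2 f3 _ hz a)

lemma foldl_rev (α : Fin 3 → ℤ) :
    ∀ L : List (Fin 3), ∀ x : Fin 3 → ℤ,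
      (L.reverse).foldl (fun w i => vAct α i w) (L.foldl (fun w i => vAct α i w) x) = x := by
  intro L
  induction L with
  | nil => intro x; rfl
  | cons a L ih =>
    intro x
    simp only [List.foldl_cons, List.reverse_cons, List.foldl_append, List.foldl_cons,
      List.foldl_nil]
    rw [ih (vAct α a x), vAct_invol]

lemma gammaRel_symm (α : Fin 3 → ℤ) {x y : Fin 3 → ℤ} (h : gammaRel α x y) :
    gammaRel α y x := by
  obtain ⟨L, hL⟩ := h
  exact ⟨L.reverse, by rw [hL, foldl_rev]⟩

lemma gammaRel_trans (α : Fin 3 → ℤ) {x y z : Fin 3 → ℤ}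
    (h1 : gammaRel α x y) (h2 : gammaRel α y z) : gammaRel α x z := by
  obtain ⟨L1, hL1⟩ := h1
  obtain ⟨L2, hL2⟩ := h2
  exact ⟨L1 ++ L2, by rw [List.foldl_append, ← hL1, ← hL2]⟩

lemma ball_finite (N : ℤ) : {y : Fin 3 → ℤ | delta y ≤ N}.Finite := by
  apply Set.Finite.subset (Set.Finite.pi (fun _ : Fin 3 => Set.finite_Icc (-N) N))
  intro y hy
  simp only [Set.mem_pi, Set.mem_univ, Set.mem_Icc, forall_true_left]
  intro i
  have h0 : |y 0| ≥ 0 := abs_nonneg _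
  have h1 : |y 1| ≥ 0 := abs_nonneg _
  have h2 : |y 2| ≥ 0 := abs_nonneg _
  have hd : |y 0| + |y 1| + |y 2| ≤ N := hy
  have : |y i| ≤ N := by fin_cases i <;> simp <;> linarith
  exact abs_le.mp this

/-- Every `Γ`-orbit contains at most finitely many points of `𝔘`. -/
theorem lemma_3_3 (α : Fin 3 → ℤ) (β : ℤ) (x : Fin 3 → ℤ)
    (hx : onV α β x) :
    {y | gammaRel α x y ∧ inU α β y}.Finite := by
  by_cases hex : ∃ y, (gammaRel α x y ∧ inU α β y) ∧ bigB α β < delta y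
  · obtain ⟨y, ⟨hxy, hUy⟩, hby⟩ := hex
    have hVy : onV α β y := hUy.1
    obtain ⟨c, f1, f2, f3⟩ := inU_structure α β y hUy hby
    apply Set.Finite.subset
      (((Set.finite_singleton y).union (Set.finite_singleton (vAct α c y))).union
        (ball_finite (bigB α β)))
    rintro z ⟨hxz, hUz⟩
    rcases le_or_gt (delta z) (bigB α β) with hsm | hbg
    · exact Or.inr hsm
    · have hyz : gammaRel α y z := gammaRel_trans α (gammaRel_symm α hxy) hxz
      obtain ⟨L, hL⟩ := hyz
      have hr : Reach α y c z := by
        rw [hL]; exact foldl_reach α β y c hVy hUy hby f1 f2 f3 L y Reach.base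
      rcases reach_inU hVy hby f3 z hr hUz with h | h
      · exact Or.inl (Or.inl h)
      · exact Or.inl (Or.inr h)
  · push_neg at hex
    apply Set.Finite.subset (ball_finite (bigB α β))
    rintro z ⟨hxz, hUz⟩
    exact hex z ⟨hxz, hUz⟩
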